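/- Let M : C ⇄ D : U be an adjunction between symmetric monoidal categories such that M is a (strong) symmetric monoidal functor. Then for any rigid (dualizable) object G of C and any object E of D, there is an isomorphism U(E ⊗ M(G)) ≅ U(E) ⊗ G, natural in E. -/
import Mathlib

open CategoryTheory CategoryTheory.MonoidalCategory CategoryTheory.Functor.LaxMonoidal
  CategoryTheory.Functor.OplaxMonoidal CategoryTheory.Functor.Monoidal

noncomputable def mapExactPairing {C D : Type*} [Category C] [Category D]
    [MonoidalCategory C] [MonoidalCategory D]
    (M : C ⥤ D) [M.Monoidal] (G H : C) [ExactPairing G H] :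
    ExactPairing (M.obj G) (M.obj H) where
  evaluation' := μ M H G ≫ M.map (ε_ G H) ≫ η M
  coevaluation' := ε M ≫ M.map (η_ G H) ≫ δ M G H
  coevaluation_evaluation' := by
    simp only [MonoidalCategory.whiskerLeft_comp, MonoidalCategory.comp_whiskerRight,
      Category.assoc]
    slice_lhs 3 3 => rw [← Category.id_comp (M.obj H ◁ δ M G H), ← (μIso M H (G ⊗ H)).hom_inv_id,
      Category.assoc]
    simp only [Category.assoc]
    simp only [μIso_hom, μIso_inv]
    rw [μ_natural_right_assoc]
    slice_lhs 4 6 => rw [Functor.OplaxMonoidal.associativity_inv]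
    simp only [Category.assoc, whiskerRight_δ_μ_assoc]
    rw [δ_natural_left_assoc]
    have h1 : M.obj H ◁ ε M ≫ μ M (H : C) (𝟙_ C) = (ρ_ (M.obj H)).hom ≫ M.map (ρ_ H).inv := by
      rw [← Functor.LaxMonoidal.right_unitality_inv M H, Iso.hom_inv_id_assoc]
    have h2 : δ M (𝟙_ C) (H : C) ≫ η M ▷ M.obj H = M.map (λ_ H).hom ≫ (λ_ (M.obj H)).inv := by
      rw [← Functor.OplaxMonoidal.left_unitality_hom M H]; simp
    rw [reassoc_of% h1]
    slice_lhs 6 7 => rw [h2]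
    simp only [Category.assoc, ← M.map_comp_assoc, ← M.map_comp]
    simp
  evaluation_coevaluation' := by
    simp only [MonoidalCategory.whiskerLeft_comp, MonoidalCategory.comp_whiskerRight,
      Category.assoc]
    slice_lhs 3 3 => rw [← Category.id_comp (δ M G H ▷ M.obj G),
      ← (μIso M (G ⊗ H) G).hom_inv_id, Category.assoc]
    simp only [μIso_hom, μIso_inv, Category.assoc]
    rw [μ_natural_left_assoc]
    have h3 : δ M ((G : C) ⊗ H) G ≫ δ M G H ▷ M.obj G ≫
        (α_ (M.obj G) (M.obj H) (M.obj G)).hom ≫ M.obj G ◁ μ M H G =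
        M.map (α_ G H G).hom ≫ δ M G (H ⊗ G) := by
      rw [Functor.Monoidal.map_associator M G H G]; simp
    slice_lhs 4 7 => rw [h3]
    simp only [Category.assoc]
    rw [δ_natural_right_assoc]
    have h4 : δ M (G : C) (𝟙_ C) ≫ M.obj G ◁ η M = M.map (ρ_ G).hom ≫ (ρ_ (M.obj G)).inv := by
      rw [← Functor.OplaxMonoidal.right_unitality_hom M G]; simp
    have h5 : ε M ▷ M.obj G ≫ μ M (𝟙_ C) (G : C) = (λ_ (M.obj G)).hom ≫ M.map (λ_ G).inv := by
      rw [← Functor.LaxMonoidal.left_unitality_inv M G, Iso.hom_inv_id_assoc]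
    rw [reassoc_of% h5]
    slice_lhs 6 7 => rw [h4]
    simp only [Category.assoc, ← M.map_comp_assoc, ← M.map_comp]
    simp


/-- For an adjunction `M ⊣ U` between symmetric monoidal categories with `M` symmetric
monoidal, and a rigid object `G` of `C` (with dual `H`), there is an isomorphism
`U(E ⊗ M(G)) ≅ U(E) ⊗ G` natural in `E`. -/
theorem stmt_0 {C D : Type*} [Category C] [Category D]
    [MonoidalCategory C] [MonoidalCategory D]
    [SymmetricCategory C] [SymmetricCategory D]
    (M : C ⥤ D) [M.Braided] (U : D ⥤ C) (adj : M ⊣ U)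
    (G H : C) [ExactPairing G H] :
    Nonempty ((tensorRight (M.obj G) ⋙ U) ≅ (U ⋙ tensorRight G)) := by
  haveI : ExactPairing (M.obj G) (M.obj H) := mapExactPairing M G H
  haveI : ExactPairing (M.obj H) (M.obj G) := BraidedCategory.exactPairing_swap _ _
  haveI : ExactPairing H G := BraidedCategory.exactPairing_swap G H
  exact ⟨Adjunction.rightAdjointUniq
    (adj.comp (tensorRightAdjunction (M.obj H) (M.obj G)))
    (((tensorRightAdjunction H G).comp adj).ofNatIsoLeft
      (Functor.Monoidal.commTensorRight M H).symm)⟩
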